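/- Let f(λ,μ) be a nonzero polynomial in ℂ[λ,μ] satisfying f(λ,μ) = −f(μ,λ), write f_{ij} for the coefficient of λ^i μ^j in f, and let n be a natural number at least the degree of f in each variable. Then there exist polynomials P₁, P₂ ∈ ℂ[X] with P₁(λ)P₂(μ) − P₁(μ)P₂(λ) = f(λ,μ) if and only if the (n+1)×(n+1) antisymmetric complex matrix M = (f_{ij})_{0 ≤ i,j ≤ n} has rank 2. -/

import Mathlib

/-- Evaluation of a bivariate polynomial f(λ,μ) at a pair of complex numbers. -/
noncomputable def ev2 (f : MvPolynomial (Fin 2) ℂ) (x y : ℂ) : ℂ :=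
  MvPolynomial.eval ![x, y] f

/-- The coefficient f_{ij} of λ^i μ^j in a bivariate polynomial f(λ,μ). -/
noncomputable def coeff2 (f : MvPolynomial (Fin 2) ℂ) (i j : ℕ) : ℂ :=
  MvPolynomial.coeff (Finsupp.single 0 i + Finsupp.single 1 j) f

/-!
The coefficient matrix of `P₁(λ)P₂(μ) − P₁(μ)P₂(λ)` is `p₁ p₂ᵀ − p₂ p₁ᵀ`, where `pₖ` is the
coefficient vector of `Pₖ`; its two columns indexed by a nonzero entry are independent, so it has
rank `2`. Conversely, a rank-`2` alternating matrix `N` with `N i₀ j₀ ≠ 0` has its column space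
spanned by columns `i₀` and `j₀`, and reading off the coefficients of each column in rows `i₀`
and `j₀` writes `N = x yᵀ − y xᵀ`; the entries of `x` and `y` are then the coefficients of
`P₁` and `P₂`.
-/

open Matrix Module Submodule Polynomial MvPolynomial

namespace Matrix

variable {K ι : Type*} [Field K] {N : Matrix ι ι K}

theorem exists_apply_ne_zero_of_ne_zero (hN : N ≠ 0) : ∃ i j, N i j ≠ 0 := by
  by_contra! h
  exact hN (Matrix.ext h)

theorem linearIndependent_col_pair (hdiag : ∀ i, N i i = 0) (hskew : ∀ i j, N j i = -N i j)
    {i j : ι} (hij : N i j ≠ 0) : LinearIndependent K ![N.col j, N.col i] := by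
  rw [LinearIndependent.pair_iff]
  intro s t hst
  have hi := congrFun hst i
  have hj := congrFun hst j
  simp only [Pi.add_apply, Pi.smul_apply, col_apply, smul_eq_mul, hdiag, Pi.zero_apply,
    mul_zero, add_zero, zero_add, hskew i j, mul_neg, neg_eq_zero] at hi hj
  exact ⟨(mul_eq_zero.1 hi).resolve_right hij, (mul_eq_zero.1 hj).resolve_right hij⟩

theorem span_col_pair_le (i j : ι) :
    span K (Set.range ![N.col j, N.col i]) ≤ span K (Set.range N.col) := by
  rw [range_cons_cons_empty, span_le, Set.insert_subset_iff, Set.singleton_subset_iff]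
  exact ⟨subset_span ⟨j, rfl⟩, subset_span ⟨i, rfl⟩⟩

variable [Fintype ι]

theorem two_le_rank_of_alternating (hdiag : ∀ i, N i i = 0) (hskew : ∀ i j, N j i = -N i j)
    (hN : N ≠ 0) : 2 ≤ N.rank := by
  obtain ⟨i, j, hij⟩ := exists_apply_ne_zero_of_ne_zero hN
  calc 2 = finrank K (span K (Set.range ![N.col j, N.col i])) := by
        rw [finrank_span_eq_card (linearIndependent_col_pair hdiag hskew hij), Fintype.card_fin]
    _ ≤ N.rank := by
        rw [rank_eq_finrank_span_cols]
        exact finrank_mono (span_col_pair_le i j)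

theorem rank_vecMulVec_sub_vecMulVec_le (x y : ι → K) :
    (vecMulVec x y - vecMulVec y x).rank ≤ 2 := by
  have hfactor : vecMulVec x y - vecMulVec y x =
      of (fun i k => ![x i, y i] k) * of ![y, -x] := by
    ext i j
    simp [mul_apply, Fin.sum_univ_two, vecMulVec_apply, sub_eq_add_neg]
  rw [hfactor]
  exact (rank_mul_le_left _ _).trans ((rank_le_card_width _).trans (Fintype.card_fin 2).le)

theorem rank_vecMulVec_sub_vecMulVec {x y : ι → K} (h : vecMulVec x y - vecMulVec y x ≠ 0) :
    (vecMulVec x y - vecMulVec y x).rank = 2 :=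
  le_antisymm (rank_vecMulVec_sub_vecMulVec_le x y) <|
    two_le_rank_of_alternating (fun i => by simp [vecMulVec_apply, mul_comm])
      (fun i j => by simp [vecMulVec_apply, mul_comm]) h

theorem exists_eq_vecMulVec_sub_vecMulVec (hdiag : ∀ i, N i i = 0)
    (hskew : ∀ i j, N j i = -N i j) (hrank : N.rank = 2) :
    ∃ x y : ι → K, N = vecMulVec x y - vecMulVec y x := by
  obtain ⟨i₀, j₀, hN⟩ := exists_apply_ne_zero_of_ne_zero (N := N) (by rintro rfl; simp at hrank)
  have hspan : span K (Set.range ![N.col j₀, N.col i₀]) = span K (Set.range N.col) := by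
    refine eq_of_le_of_finrank_le (span_col_pair_le i₀ j₀) ?_
    rw [finrank_span_eq_card (linearIndependent_col_pair hdiag hskew hN), Fintype.card_fin,
      ← rank_eq_finrank_span_cols, hrank]
  refine ⟨N.col i₀, (N i₀ j₀)⁻¹ • N.col j₀, ?_⟩
  ext i j
  obtain ⟨a, b, hab⟩ : ∃ a b : K, a • N.col j₀ + b • N.col i₀ = N.col j := by
    rw [← mem_span_pair, ← range_cons_cons_empty, hspan]
    exact subset_span ⟨j, rfl⟩
  have hrow : ∀ k, a * N k j₀ + b * N k i₀ = N k j := fun k => by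
    simpa using congrFun hab k
  have hi₀ := hrow i₀
  have hj₀ := hrow j₀
  simp only [hdiag, mul_zero, add_zero, zero_add] at hi₀ hj₀
  simp only [Matrix.sub_apply, vecMulVec_apply, col_apply, Pi.smul_apply, smul_eq_mul]
  field_simp
  linear_combination (-(N i₀ j₀)) * hrow i + N i j₀ * hi₀ + N i j₀ * hskew j i₀
    - N i i₀ * hj₀ - N i i₀ * hskew j j₀ + (b * N i i₀) * hskew i₀ j₀

end Matrix

theorem Polynomial.coeff_degreeLTEquiv_symm {R : Type*} [CommRing R] {m : ℕ} (x : Fin m → R) (k : ℕ) :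
    ((degreeLTEquiv R m).symm x : R[X]).coeff k = if h : k < m then x ⟨k, h⟩ else 0 := by
  split_ifs with h
  · exact congrFun ((degreeLTEquiv R m).apply_symm_apply x) ⟨k, h⟩
  · refine coeff_eq_zero_of_degree_lt
      ((mem_degreeLT.1 ((degreeLTEquiv R m).symm x).2).trans_le ?_)
    exact_mod_cast not_lt.1 h

section Bivariate

theorem coeff2_eq_coeff (f : MvPolynomial (Fin 2) ℂ) (d : Fin 2 →₀ ℕ) :
    coeff2 f (d 0) (d 1) = f.coeff d := by
  have hd : Finsupp.single 0 (d 0) + Finsupp.single 1 (d 1) = d := by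
    ext k
    fin_cases k <;> simp
  rw [coeff2, hd]

theorem ext_coeff2 {f g : MvPolynomial (Fin 2) ℂ}
    (h : ∀ i j, coeff2 f i j = coeff2 g i j) : f = g :=
  MvPolynomial.ext _ _ fun d => by
    rw [← coeff2_eq_coeff, ← coeff2_eq_coeff, h]

theorem funext_ev2 {f g : MvPolynomial (Fin 2) ℂ}
    (h : ∀ l m, ev2 f l m = ev2 g l m) : f = g :=
  MvPolynomial.funext fun v => by
    have hv : v = ![v 0, v 1] := by
      ext k
      fin_cases k <;> rfl
    rw [hv]
    exact h (v 0) (v 1)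

theorem le_degreeOf_of_coeff2_ne_zero {f : MvPolynomial (Fin 2) ℂ} {i j : ℕ}
    (h : coeff2 f i j ≠ 0) : i ≤ degreeOf 0 f ∧ j ≤ degreeOf 1 f := by
  have hd := mem_support_iff.2 h
  constructor
  · simpa using monomial_le_degreeOf 0 hd
  · simpa using monomial_le_degreeOf 1 hd

theorem coeff2_rename_swap (f : MvPolynomial (Fin 2) ℂ) (i j : ℕ) :
    coeff2 (rename (Equiv.swap 0 1) f) i j = coeff2 f j i := by
  have hswap : Finsupp.mapDomain (Equiv.swap (0 : Fin 2) 1)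
      (Finsupp.single 0 j + Finsupp.single 1 i) = Finsupp.single 0 i + Finsupp.single 1 j := by
    simp [Finsupp.mapDomain_add, add_comm]
  rw [coeff2, ← hswap, coeff_rename_mapDomain _ (Equiv.injective _), coeff2]

theorem coeff2_swap {f : MvPolynomial (Fin 2) ℂ} (hskew : ∀ l m, ev2 f l m = -ev2 f m l)
    (i j : ℕ) : coeff2 f j i = -coeff2 f i j := by
  have hrename : rename (Equiv.swap 0 1) f = -f := funext_ev2 fun l m => by
    simpa [ev2, eval_rename] using hskew m l
  rw [← coeff2_rename_swap, hrename, coeff2, coeff_neg, coeff2]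

theorem coeff2_toMvPolynomial_mul (P Q : ℂ[X]) (i j : ℕ) :
    coeff2 (P.toMvPolynomial 0 * Q.toMvPolynomial 1) i j = P.coeff i * Q.coeff j := by
  induction P using Polynomial.induction_on' with
  | add P₁ P₂ h₁ h₂ =>
    simp only [coeff2, map_add, add_mul, MvPolynomial.coeff_add, Polynomial.coeff_add] at h₁ h₂ ⊢
    rw [h₁, h₂]
  | monomial a c =>
    induction Q using Polynomial.induction_on' with
    | add Q₁ Q₂ h₁ h₂ =>
      simp only [coeff2, map_add, mul_add, MvPolynomial.coeff_add, Polynomial.coeff_add]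
        at h₁ h₂ ⊢
      rw [h₁, h₂]
    | monomial b d =>
      simp [coeff2, Polynomial.toMvPolynomial, Polynomial.coeff_monomial,
        MvPolynomial.C_mul_X_pow_eq_monomial, monomial_mul, MvPolynomial.coeff_monomial,
        Finsupp.ext_iff, Fin.forall_fin_two]
      by_cases a = i <;> simp [*]

noncomputable def wedge (P Q : ℂ[X]) : MvPolynomial (Fin 2) ℂ :=
  P.toMvPolynomial 0 * Q.toMvPolynomial 1 - Q.toMvPolynomial 0 * P.toMvPolynomial 1

theorem ev2_wedge (P Q : ℂ[X]) (l m : ℂ) :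
    ev2 (wedge P Q) l m = P.eval l * Q.eval m - P.eval m * Q.eval l := by
  simp only [ev2, wedge, map_sub, map_mul, eval_toMvPolynomial]
  simp only [cons_val_zero, cons_val_one]
  ring

theorem coeff2_wedge (P Q : ℂ[X]) (i j : ℕ) :
    coeff2 (wedge P Q) i j = P.coeff i * Q.coeff j - Q.coeff i * P.coeff j := by
  rw [← coeff2_toMvPolynomial_mul, ← coeff2_toMvPolynomial_mul, coeff2, coeff2, coeff2,
    wedge, coeff_sub]

theorem wedge_eq_iff {P Q : ℂ[X]} {f : MvPolynomial (Fin 2) ℂ} :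
    wedge P Q = f ↔ ∀ l m, P.eval l * Q.eval m - P.eval m * Q.eval l = ev2 f l m := by
  refine ⟨?_, fun h => funext_ev2 fun l m => (ev2_wedge P Q l m).trans (h l m)⟩
  rintro rfl l m
  exact (ev2_wedge P Q l m).symm

end Bivariate

section CoeffMatrix

noncomputable def coeffMatrix (f : MvPolynomial (Fin 2) ℂ) (n : ℕ) :
    Matrix (Fin (n + 1)) (Fin (n + 1)) ℂ :=
  of fun i j => coeff2 f i j

variable {f : MvPolynomial (Fin 2) ℂ} {n : ℕ}

theorem coeffMatrix_wedge (P Q : ℂ[X]) (n : ℕ) :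
    coeffMatrix (wedge P Q) n =
      vecMulVec (fun i : Fin (n + 1) => P.coeff i) (fun j : Fin (n + 1) => Q.coeff j)
        - vecMulVec (fun i : Fin (n + 1) => Q.coeff i) (fun j : Fin (n + 1) => P.coeff j) := by
  ext i j
  simp [coeffMatrix, coeff2_wedge, vecMulVec_apply]

theorem coeffMatrix_ne_zero (hf : f ≠ 0) (hn0 : degreeOf 0 f ≤ n) (hn1 : degreeOf 1 f ≤ n) :
    coeffMatrix f n ≠ 0 := by
  obtain ⟨i, j, hij⟩ : ∃ i j, coeff2 f i j ≠ 0 := by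
    by_contra! h
    exact hf (ext_coeff2 fun i j => (h i j).trans (MvPolynomial.coeff_zero _).symm)
  obtain ⟨hi, hj⟩ := le_degreeOf_of_coeff2_ne_zero hij
  intro h0
  exact hij (congrFun₂ h0 ⟨i, by omega⟩ ⟨j, by omega⟩)

theorem coeffMatrix_apply_swap (hskew : ∀ l m, ev2 f l m = -ev2 f m l) (i j : Fin (n + 1)) :
    coeffMatrix f n j i = -coeffMatrix f n i j :=
  coeff2_swap hskew i j

theorem coeffMatrix_apply_self (hskew : ∀ l m, ev2 f l m = -ev2 f m l) (i : Fin (n + 1)) :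
    coeffMatrix f n i i = 0 :=
  self_eq_neg.1 (coeffMatrix_apply_swap hskew i i)

theorem wedge_eq_of_coeffMatrix_eq (hn0 : degreeOf 0 f ≤ n) (hn1 : degreeOf 1 f ≤ n)
    {x y : Fin (n + 1) → ℂ} (h : coeffMatrix f n = vecMulVec x y - vecMulVec y x) :
    wedge ((degreeLTEquiv ℂ (n + 1)).symm x) ((degreeLTEquiv ℂ (n + 1)).symm y) = f := by
  refine ext_coeff2 fun i j => ?_
  simp only [coeff2_wedge, coeff_degreeLTEquiv_symm]
  by_cases hi : i < n + 1 <;> by_cases hj : j < n + 1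
  · simpa [hi, hj, coeffMatrix, vecMulVec_apply] using (congrFun₂ h ⟨i, hi⟩ ⟨j, hj⟩).symm
  all_goals
    have hzero : coeff2 f i j = 0 := by
      by_contra hne
      have := le_degreeOf_of_coeff2_ne_zero hne
      omega
    simp [hi, hj, hzero]

end CoeffMatrix

/-- For a nonzero antisymmetric polynomial f(λ,μ) and n at least the degree
of f in each variable, there exist polynomials P₁, P₂ with
P₁(λ)P₂(μ) − P₁(μ)P₂(λ) = f(λ,μ) iff the (n+1)×(n+1) matrix M = (f_{ij}) has rank 2. -/
theorem stmt_5 (f : MvPolynomial (Fin 2) ℂ) (hf : f ≠ 0)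
    (hskew : ∀ l m : ℂ, ev2 f l m = - ev2 f m l)
    (n : ℕ) (hn0 : MvPolynomial.degreeOf 0 f ≤ n) (hn1 : MvPolynomial.degreeOf 1 f ≤ n) :
    (∃ P₁ P₂ : Polynomial ℂ, ∀ l m : ℂ,
        P₁.eval l * P₂.eval m - P₁.eval m * P₂.eval l = ev2 f l m) ↔
    (Matrix.of fun i j : Fin (n + 1) => coeff2 f i j).rank = 2 := by
  change _ ↔ (coeffMatrix f n).rank = 2
  constructor
  · rintro ⟨P, Q, hPQ⟩
    obtain rfl := wedge_eq_iff.2 hPQ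
    have hne := coeffMatrix_ne_zero hf hn0 hn1
    rw [coeffMatrix_wedge] at hne ⊢
    exact rank_vecMulVec_sub_vecMulVec hne
  · intro hrank
    obtain ⟨x, y, hxy⟩ := exists_eq_vecMulVec_sub_vecMulVec (coeffMatrix_apply_self hskew)
      (coeffMatrix_apply_swap hskew) hrank
    exact ⟨_, _, wedge_eq_iff.1 (wedge_eq_of_coeffMatrix_eq hn0 hn1 hxy)⟩
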